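/- arXiv:1309.1459 — 3 statements merged into one kernel-verified Lean document; each statement's English description precedes it below -/
import Mathlib

section
/- Let M be a smooth embedded hypersurface in R^{n+1} given by an embedding F with unit normal ν, and define μ(x) = sup over y ≠ x of 2⟨F(x)−F(y), ν(x)⟩/|F(x)−F(y)|². Then every principal curvature λ_i(x) of M at x satisfies λ_i(x) ≤ μ(x); in particular the largest principal curvature λ_n(x) ≤ μ(x). -/
/-!
Every point `q` of the hypersurface satisfies `2⟪F x - q, ν x⟫ ≤ μ ‖F x - q‖²`, by definition
of `μ` as a supremum. Along the curve `c` through `F x`, the function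
`t ↦ 2⟪F x - c t, ν x⟫ - μ ‖F x - c t‖²` therefore attains its maximum `0` at `t = 0`, so its
second derivative there, `-2⟪c''(0), ν x⟫ - 2μ ‖c'(0)‖² = 2λ - 2μ`, is nonpositive.
-/

open Filter Topology Set
open scoped RealInnerProductSpace

theorem IsLocalMax.second_derivative_nonpos {f f' : ℝ → ℝ} {a L : ℝ} (h : IsLocalMax f a)
    (hf : ∀ᶠ t in 𝓝 a, HasDerivAt f (f' t) t) (hf' : HasDerivAt f' L a) : L ≤ 0 := by
  by_contra! hL
  have hf'a : f' a = 0 := h.hasDerivAt_eq_zero hf.self_of_nhds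
  have hpos : ∀ᶠ t in 𝓝[>] a, 0 < f' t := by
    have hslope := (hasDerivAt_iff_tendsto_slope.1 hf').eventually (eventually_gt_nhds hL)
    filter_upwards [nhdsWithin_mono _ (fun t ht => ne_of_gt ht) hslope, self_mem_nhdsWithin]
      with t hslope ht
    rw [slope_def_field, hf'a, sub_zero] at hslope
    exact (div_pos_iff_of_pos_right (sub_pos.2 ht)).1 hslope
  obtain ⟨c, hac, hright⟩ := (nhdsGT_basis a).eventually_iff.1
    (hpos.and ((h.filter_mono nhdsWithin_le_nhds).and (hf.filter_mono nhdsWithin_le_nhds)))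
  obtain ⟨b, hab, hbc⟩ := exists_between hac
  have hIoc : Ioc a b ⊆ Ioo a c := fun t ht => ⟨ht.1, ht.2.trans_lt hbc⟩
  have hmono : StrictMonoOn f (Icc a b) := by
    refine strictMonoOn_of_hasDerivWithinAt_pos (convex_Icc a b) (f' := f') ?_ ?_ ?_
    · intro t ht
      rcases ht.1.eq_or_lt with rfl | hat
      · exact hf.self_of_nhds.continuousAt.continuousWithinAt
      · exact (hright (hIoc ⟨hat, ht.2⟩)).2.2.continuousAt.continuousWithinAt
    · rw [interior_Icc]
      exact fun t ht => (hright (hIoc (Ioo_subset_Ioc_self ht))).2.2.hasDerivWithinAt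
    · rw [interior_Icc]
      exact fun t ht => (hright (hIoc (Ioo_subset_Ioc_self ht))).1
  exact (hright ⟨hab, hbc⟩).2.1.not_gt
    (hmono (left_mem_Icc.2 hab.le) (right_mem_Icc.2 hab.le) hab)

section
variable {E : Type*} [NormedAddCommGroup E] [InnerProductSpace ℝ E]

theorem two_inner_le_mul_norm_sq_of_mem_upperBounds {M : Type*} {F : M → E} {ν : E} {x : M}
    {μ : ℝ} (hμ : μ ∈ upperBounds {r : ℝ | ∃ y : M, y ≠ x ∧
      r = 2 * ⟪F x - F y, ν⟫ / ‖F x - F y‖ ^ 2}) (y : M) :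
    2 * ⟪F x - F y, ν⟫ ≤ μ * ‖F x - F y‖ ^ 2 := by
  by_cases hFy : F y = F x
  · simp [hFy]
  have hpos : 0 < ‖F x - F y‖ ^ 2 := by
    have : F x - F y ≠ 0 := sub_ne_zero.2 (Ne.symm hFy)
    positivity
  exact (div_le_iff₀ hpos).1 (hμ ⟨y, fun hyx => hFy (congrArg F hyx), rfl⟩)

theorem hasDerivAt_two_inner_sub_mul_norm_sq {c : ℝ → E} {v : E} {t : ℝ} (p ν : E) (μ : ℝ)
    (hc : HasDerivAt c v t) :
    HasDerivAt (fun s => 2 * ⟪p - c s, ν⟫ - μ * ‖p - c s‖ ^ 2)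
      (-2 * ⟪v, ν⟫ + 2 * μ * ⟪p - c t, v⟫) t := by
  have hpc := hc.const_sub p
  refine (((hpc.inner ℝ (hasDerivAt_const t ν)).const_mul 2).sub
    (hpc.norm_sq.const_mul μ)).congr_deriv ?_
  simp only [inner_zero_right, inner_neg_left, inner_neg_right]
  ring

theorem hasDerivAt_neg_two_inner_add_mul_inner_sub {c c' : ℝ → E} {a p : E} {s : ℝ} (ν : E)
    (μ : ℝ) (hc : HasDerivAt c (c' s) s) (hc' : HasDerivAt c' a s) (hp : c s = p) :
    HasDerivAt (fun t => -2 * ⟪c' t, ν⟫ + 2 * μ * ⟪p - c t, c' t⟫)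
      (-2 * ⟪a, ν⟫ - 2 * μ * ‖c' s‖ ^ 2) s := by
  refine (((hc'.inner ℝ (hasDerivAt_const s ν)).const_mul (-2)).add
    (((hc.const_sub p).inner ℝ hc').const_mul (2 * μ))).congr_deriv ?_
  simp only [hp, inner_zero_right, sub_self, inner_zero_left, inner_neg_left,
    real_inner_self_eq_norm_sq]
  ring

end

theorem stmt0_general {n : ℕ} {M : Type*}
    (F : M → EuclideanSpace ℝ (Fin (n + 1)))
    (ν : M → EuclideanSpace ℝ (Fin (n + 1)))
    (x : M)
    (μ : ℝ)
    (hμ : IsLUB {r : ℝ | ∃ y : M, y ≠ x ∧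
      r = 2 * (inner ℝ (F x - F y) (ν x) : ℝ) / ‖F x - F y‖ ^ 2} μ)
    (lam : ℝ) (c : ℝ → EuclideanSpace ℝ (Fin (n + 1)))
    (hc : ContDiff ℝ 2 c)
    (hrange : ∀ t, c t ∈ Set.range F)
    (hc0 : c 0 = F x)
    (hunit : ‖deriv c 0‖ = 1)
    (hlam : lam = -(inner ℝ (deriv (deriv c) 0) (ν x) : ℝ)) :
    lam ≤ μ := by
  obtain ⟨hdiff, -, hc'⟩ := contDiff_succ_iff_deriv.1 (show ContDiff ℝ (1 + 1) c from hc)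
  have hmax : IsLocalMax (fun t => 2 * ⟪F x - c t, ν x⟫ - μ * ‖F x - c t‖ ^ 2) 0 := by
    refine IsMaxOn.isLocalMax (fun t _ => ?_) univ_mem
    obtain ⟨y, hy⟩ := hrange t
    have := two_inner_le_mul_norm_sq_of_mem_upperBounds hμ.1 y
    simp only [mem_ofPred_eq, hc0, ← hy, sub_self, inner_zero_left, norm_zero]
    linarith
  have hsecond := hmax.second_derivative_nonpos
    (.of_forall fun t => hasDerivAt_two_inner_sub_mul_norm_sq (F x) (ν x) μ (hdiff t).hasDerivAt)
    (hasDerivAt_neg_two_inner_add_mul_inner_sub (ν x) μ (hdiff 0).hasDerivAt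
      ((hc'.differentiable one_ne_zero 0).hasDerivAt) hc0)
  rw [hunit] at hsecond
  linarith

/-- Every principal curvature (realized as the normal curvature `-⟨c''(0), ν x⟩` of a
unit-speed-at-0 curve in the hypersurface, tangent at `x`, with outward unit normal `ν`)
is bounded above by `μ(x)`, the reciprocal of the inscribed radius
`μ(x) = sup_{y ≠ x} 2⟨F(x)−F(y), ν(x)⟩/|F(x)−F(y)|²`. -/
theorem stmt0 {n : ℕ} {M : Type*}
    (F : M → EuclideanSpace ℝ (Fin (n + 1)))
    (ν : M → EuclideanSpace ℝ (Fin (n + 1)))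
    (hF : Function.Injective F)
    (x : M) (hν : ‖ν x‖ = 1)
    (μ : ℝ)
    (hμ : IsLUB {r : ℝ | ∃ y : M, y ≠ x ∧
      r = 2 * (inner ℝ (F x - F y) (ν x) : ℝ) / ‖F x - F y‖ ^ 2} μ)
    (lam : ℝ) (c : ℝ → EuclideanSpace ℝ (Fin (n + 1)))
    (hc : ContDiff ℝ 2 c)
    (hrange : ∀ t, c t ∈ Set.range F)
    (hc0 : c 0 = F x)
    (hunit : ‖deriv c 0‖ = 1)
    (htang : (inner ℝ (deriv c 0) (ν x) : ℝ) = 0)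
    (hlam : lam = -(inner ℝ (deriv (deriv c) 0) (ν x) : ℝ)) :
    lam ≤ μ :=
  stmt0_general F ν x μ hμ lam c hc hrange hc0 hunit hlam
end

section
/- Let F : M → R^{n+1} be a smooth embedding with unit normal ν, and define ρ(x) = max{ sup_{y ≠ x} ( −2⟨F(x)−F(y), ν(x)⟩/|F(x)−F(y)|² ), 0 }. Then −ρ(x) ≤ λ_1(x), i.e. every principal curvature is bounded below by −ρ(x). -/
/-!
The bound `-2⟨F x - F y, ν x⟩ ≤ ρ ‖F x - F y‖²` says that `F(M)` avoids the open ball of radius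
`1/ρ` touching `F x` from the side of `ν x`. Along a curve `c` in `F(M)` through `F x` the function
`g t = ρ ‖c t - F x‖² - 2 ⟨c t - F x, ν x⟩` is therefore nonnegative and vanishes at `0`, so its
second derivative `g''(0) = 2ρ ‖c'(0)‖² - 2 ⟨c''(0), ν x⟩ = 2 (ρ + λ)` is nonnegative.
-/

open Filter Topology RealInnerProductSpace

theorem IsLocalMin.deriv_deriv_nonneg {f : ℝ → ℝ} {a : ℝ} (h : IsLocalMin f a)
    (hf : ContinuousAt f a) : 0 ≤ deriv (deriv f) a := by
  by_contra! hneg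
  have hmax : IsLocalMax f a := isLocalMax_of_deriv_deriv_neg hneg h.deriv_eq_zero hf
  have hconst : f =ᶠ[𝓝 a] fun _ => f a := by
    filter_upwards [h, hmax] with y hmin hmax using le_antisymm hmax hmin
  have : deriv (deriv f) a = 0 := by
    rw [hconst.deriv.deriv_eq]
    simp
  exact hneg.ne this

section InnerProductSpace

variable {E : Type*} [NormedAddCommGroup E] [InnerProductSpace ℝ E]

theorem neg_two_inner_le_mul_norm_sq_of_div_le {v ν : E} {ρ : ℝ}
    (h : -(2 * ⟪v, ν⟫) / ‖v‖ ^ 2 ≤ ρ) : -(2 * ⟪v, ν⟫) ≤ ρ * ‖v‖ ^ 2 := by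
  rcases eq_or_ne v 0 with rfl | hv
  · simp
  · rwa [div_le_iff₀ (by positivity)] at h

theorem deriv_deriv_mul_norm_sub_sq_sub_inner {c : ℝ → E} {t : ℝ} (hc : Differentiable ℝ c)
    (hc' : DifferentiableAt ℝ (deriv c) t) (ρ : ℝ) (p ν : E) :
    deriv (deriv fun s => ρ * ‖c s - p‖ ^ 2 - 2 * ⟪c s - p, ν⟫) t =
      2 * ρ * (‖deriv c t‖ ^ 2 + ⟪c t - p, deriv (deriv c) t⟫) - 2 * ⟪deriv (deriv c) t, ν⟫ := by
  have hfirst : deriv (fun s => ρ * ‖c s - p‖ ^ 2 - 2 * ⟪c s - p, ν⟫) =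
      fun s => 2 * ρ * ⟪c s - p, deriv c s⟫ - 2 * ⟪deriv c s, ν⟫ := by
    funext s
    have hcs : HasDerivAt (fun s => c s - p) (deriv c s) s := (hc s).hasDerivAt.sub_const p
    refine ((hcs.norm_sq.const_mul ρ).sub
      ((hcs.inner ℝ (hasDerivAt_const s ν)).const_mul 2)).deriv.trans ?_
    simp only [inner_zero_right, zero_add]
    ring
  have hct : HasDerivAt (fun s => c s - p) (deriv c t) t := (hc t).hasDerivAt.sub_const p
  rw [hfirst]
  refine ((((hct.inner ℝ hc'.hasDerivAt).const_mul (2 * ρ))).sub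
    ((hc'.hasDerivAt.inner ℝ (hasDerivAt_const t ν)).const_mul 2)).deriv.trans ?_
  rw [real_inner_self_eq_norm_sq, inner_zero_right, zero_add]
  ring

end InnerProductSpace

theorem stmt1_general {n : ℕ} {M : Type*}
    (F : M → EuclideanSpace ℝ (Fin (n + 1)))
    (ν : M → EuclideanSpace ℝ (Fin (n + 1)))
    (x : M)
    (ρ : ℝ)
    (hρ : IsLUB ({r : ℝ | ∃ y : M, y ≠ x ∧
      r = -(2 * (inner ℝ (F x - F y) (ν x) : ℝ)) / ‖F x - F y‖ ^ 2} ∪ {0}) ρ)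
    (lam : ℝ) (c : ℝ → EuclideanSpace ℝ (Fin (n + 1)))
    (hc : ContDiff ℝ 2 c)
    (hrange : ∀ t, c t ∈ Set.range F)
    (hc0 : c 0 = F x)
    (hunit : ‖deriv c 0‖ = 1)
    (hlam : lam = -(inner ℝ (deriv (deriv c) 0) (ν x) : ℝ)) :
    -ρ ≤ lam := by
  set g : ℝ → ℝ := fun t => ρ * ‖c t - F x‖ ^ 2 - 2 * ⟪c t - F x, ν x⟫ with hg
  have hmin : IsLocalMin g 0 := by
    refine IsMinOn.isLocalMin (fun t _ => ?_) univ_mem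
    obtain ⟨y, hy⟩ := hrange t
    simp only [Set.mem_ofPred_eq, hg, hc0, ← hy, sub_self, norm_zero, inner_zero_left]
    rcases eq_or_ne y x with rfl | hyx
    · simp
    · have hbound := neg_two_inner_le_mul_norm_sq_of_div_le (hρ.1 (Or.inl ⟨y, hyx, rfl⟩))
      rw [← neg_sub, inner_neg_left, norm_neg] at hbound
      linarith
  have hcont : ContinuousAt g 0 := by
    have := hc.continuous
    fun_prop
  have hsecond := deriv_deriv_mul_norm_sub_sq_sub_inner (hc.differentiable two_ne_zero)
    (hc.differentiable_deriv_two 0) ρ (F x) (ν x)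
  rw [hc0, sub_self, inner_zero_left, hunit] at hsecond
  have hnonneg := hmin.deriv_deriv_nonneg hcont
  rw [hsecond] at hnonneg
  rw [hlam]
  linarith

/-- Every principal curvature (realized as the normal curvature `-⟨c''(0), ν x⟩` of a curve
in the hypersurface, tangent at `x`, with outward unit normal `ν`) is bounded below by
`-ρ(x)`, where `ρ(x) = max{ sup_{y ≠ x} (−2⟨F(x)−F(y), ν(x)⟩/|F(x)−F(y)|²), 0 }` is the
reciprocal of the outer radius at `x`. -/
theorem stmt1 {n : ℕ} {M : Type*}
    (F : M → EuclideanSpace ℝ (Fin (n + 1)))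
    (ν : M → EuclideanSpace ℝ (Fin (n + 1)))
    (hF : Function.Injective F)
    (x : M) (hν : ‖ν x‖ = 1)
    (ρ : ℝ)
    (hρ : IsLUB ({r : ℝ | ∃ y : M, y ≠ x ∧
      r = -(2 * (inner ℝ (F x - F y) (ν x) : ℝ)) / ‖F x - F y‖ ^ 2} ∪ {0}) ρ)
    (lam : ℝ) (c : ℝ → EuclideanSpace ℝ (Fin (n + 1)))
    (hc : ContDiff ℝ 2 c)
    (hrange : ∀ t, c t ∈ Set.range F)
    (hc0 : c 0 = F x)
    (hunit : ‖deriv c 0‖ = 1)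
    (htang : (inner ℝ (deriv c 0) (ν x) : ℝ) = 0)
    (hlam : lam = -(inner ℝ (deriv (deriv c) 0) (ν x) : ℝ)) :
    -ρ ≤ lam :=
  stmt1_general F ν x ρ hρ lam c hc hrange hc0 hunit hlam
end

section
/- Let H > 0, Φ > 0, |A|², ε, K₁, Λ ≥ 1, δ > 0, μ be real numbers satisfying μ ≥ (1+δ)H, μ ≤ ΛH, |A|² ≤ (1+ε)H² + K₂, and set ε = δ/(4n⁴Λ²). Then H μ² − |A|² μ − n³(nε μ + K₁) μ² ≥ (δ/2) H² μ − C H, where C is a constant depending only on n, δ, Λ, K₁, K₂. -/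
/-- Cubic absorption: for `a > 0`, `b ≥ 0`, `H ≥ 0`,
`a H³ - b H² + (b²/a) H ≥ 0`. -/
lemma cube_absorb (a b H : ℝ) (ha : 0 < a) (hb : 0 ≤ b) (hH : 0 ≤ H) :
    0 ≤ a * H ^ 3 - b * H ^ 2 + (b ^ 2 / a) * H := by
  have hc : a * (b ^ 2 / a) = b ^ 2 := mul_div_cancel₀ _ ha.ne'
  have key : a * 0 ≤ a * (a * H ^ 3 - b * H ^ 2 + (b ^ 2 / a) * H) := by
    nlinarith [mul_nonneg hH (sq_nonneg (a * H - b / 2)), mul_nonneg hH (sq_nonneg b)]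
  exact le_of_mul_le_mul_left key ha

/-- Pointwise coercivity estimate: with `ε = δ/(4n⁴Λ²)`, there is a constant
`C = C(n, δ, Λ, K₁, K₂)` such that whenever `H > 0`, `(1+δ)H ≤ μ ≤ ΛH` and
`|A|² ≤ (1+ε)H² + K₂`, one has
`Hμ² − |A|²μ − n³(nεμ + K₁)μ² ≥ (δ/2)H²μ − C·H`. -/
theorem stmt6 (n : ℕ) (hn : 2 ≤ n) (δ Λ K₁ K₂ : ℝ)
    (hδ : 0 < δ) (hΛ : 1 ≤ Λ) (hK₁ : 0 ≤ K₁) (hK₂ : 0 ≤ K₂) :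
    ∃ C : ℝ, ∀ H μ A2 : ℝ, 0 < H → (1 + δ) * H ≤ μ → μ ≤ Λ * H →
      A2 ≤ (1 + δ / (4 * (n : ℝ) ^ 4 * Λ ^ 2)) * H ^ 2 + K₂ →
      H * μ ^ 2 - A2 * μ
          - (n : ℝ) ^ 3 * ((n : ℝ) * (δ / (4 * (n : ℝ) ^ 4 * Λ ^ 2)) * μ + K₁) * μ ^ 2
        ≥ (δ / 2) * H ^ 2 * μ - C * H := by
  have hN : (2:ℝ) ≤ (n:ℝ) := by exact_mod_cast hn
  have hN0 : (0:ℝ) < (n:ℝ) := by linarith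
  have hΛ0 : (0:ℝ) < Λ := by linarith
  have h16 : (16:ℝ) ≤ (n:ℝ) ^ 4 := by
    calc (16:ℝ) = 2 ^ 4 := by norm_num
      _ ≤ (n:ℝ) ^ 4 := pow_le_pow_left₀ (by norm_num) hN 4
  have hΛ2 : (1:ℝ) ≤ Λ ^ 2 := by nlinarith
  have hD : (16:ℝ) ≤ (n:ℝ) ^ 4 * Λ ^ 2 := by
    calc (16:ℝ) = 16 * 1 := by norm_num
      _ ≤ (n:ℝ) ^ 4 * Λ ^ 2 := by
          apply mul_le_mul h16 hΛ2 zero_le_one (by positivity)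
  have hden : (0:ℝ) < 4 * (n:ℝ) ^ 4 * Λ ^ 2 := by positivity
  set e : ℝ := δ / (4 * (n : ℝ) ^ 4 * Λ ^ 2) with he
  have he0 : 0 < e := div_pos hδ hden
  have hekey : e * (4 * (n:ℝ) ^ 4 * Λ ^ 2) = δ := div_mul_cancel₀ _ (ne_of_gt hden)
  have hele : e ≤ δ / 64 := by
    rw [le_div_iff₀ (by norm_num : (0:ℝ) < 64)]
    nlinarith
  refine ⟨((n:ℝ) ^ 3 * K₁ * Λ ^ 2) ^ 2 / (15 * δ / 64) + Λ * K₂, ?_⟩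
  intro H μ A2 hH hμl hμu hA2
  have hμ0 : 0 < μ := by nlinarith
  have hHμ : H ≤ μ := by nlinarith
  have hμ2 : μ ^ 2 ≤ Λ ^ 2 * H ^ 2 := by nlinarith
  -- bound on A2 with numeric epsilon
  have h1' : A2 ≤ (1 + δ / 64) * H ^ 2 + K₂ := by
    have := mul_le_mul_of_nonneg_right hele (sq_nonneg H)
    nlinarith
  have h1 : A2 * μ ≤ ((1 + δ / 64) * H ^ 2 + K₂) * μ :=
    mul_le_mul_of_nonneg_right h1' hμ0.le
  have h2 : K₂ * μ ≤ Λ * K₂ * H := by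
    have := mul_le_mul_of_nonneg_left hμu hK₂
    linarith
  have h3 : (1 + δ) * H ^ 2 * μ ≤ H * μ ^ 2 := by
    have := mul_le_mul_of_nonneg_left hμl (mul_pos hH hμ0).le
    linarith
  -- epsilon cubic term
  have hkey : (n:ℝ) ^ 4 * e * Λ ^ 2 = δ / 4 := by linear_combination (1/4) * hekey
  have hstep : (n:ℝ) ^ 4 * e * μ ^ 2 ≤ (n:ℝ) ^ 4 * e * (Λ ^ 2 * H ^ 2) :=
    mul_le_mul_of_nonneg_left hμ2 (by positivity)
  have h4 : (n:ℝ) ^ 4 * e * μ ^ 3 ≤ (δ / 4) * H ^ 2 * μ := by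
    have h := mul_le_mul_of_nonneg_right hstep hμ0.le
    calc (n:ℝ) ^ 4 * e * μ ^ 3 = (n:ℝ) ^ 4 * e * μ ^ 2 * μ := by ring
      _ ≤ (n:ℝ) ^ 4 * e * (Λ ^ 2 * H ^ 2) * μ := h
      _ = (δ / 4) * H ^ 2 * μ := by linear_combination H ^ 2 * μ * hkey
  have h5 : (n:ℝ) ^ 3 * K₁ * μ ^ 2 ≤ (n:ℝ) ^ 3 * K₁ * (Λ ^ 2 * H ^ 2) :=
    mul_le_mul_of_nonneg_left hμ2 (by positivity)
  -- cubic absorption with a = 15δ/64, b = n³K₁Λ²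
  have h6 : 0 ≤ (15 * δ / 64) * H ^ 3 - ((n:ℝ) ^ 3 * K₁ * Λ ^ 2) * H ^ 2
      + (((n:ℝ) ^ 3 * K₁ * Λ ^ 2) ^ 2 / (15 * δ / 64)) * H :=
    cube_absorb _ _ _ (by linarith) (by positivity) hH.le
  have h7 : H ^ 3 ≤ H ^ 2 * μ := by
    have := mul_le_mul_of_nonneg_left hHμ (sq_nonneg H)
    linarith
  have h7' : δ * H ^ 3 ≤ δ * (H ^ 2 * μ) := mul_le_mul_of_nonneg_left h7 hδ.le
  linarith [h1, h2, h3, h4, h5, h6, h7']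
end
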